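/- arXiv:1904.09125 — 2 statements merged into one kernel-verified Lean document; each statement's English description precedes it below -/
import Mathlib

section
/- For k ≥ 3, there is no strictly balanced word w of length 2k over {a,b} whose k-spectrum has cardinality exactly k + 2. -/
def wa : Bool := false
def wb : Bool := true

/-- The set of scattered factors (subsequences) of `w` of length exactly `k`. -/
def ScatFact (k : ℕ) (w : List Bool) : Finset (List Bool) :=
  (w.sublists.filter (fun u => u.length = k)).toFinset

/-! Group the length-`k` subsequences of `w` by their number `j ∈ [0, k]` of letters `a`.
If `w` avoids `ba` (or `ab`) as a subsequence, it is sorted and every group has at most one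
element, so the spectrum has at most `k + 1` words. Otherwise every group is nonempty, and an `a`
of `w` with `T` letters `b` before it yields the words `bˢabᵏ⁻¹⁻ˢ` for `s ∈ {T - 1, T} ∩ [0, k-1]`.
Using an `a` after some `b` and an `a` before some `b`, this gives two words with one `a`, and
symmetrically two with one `b`; since `k ≥ 3` these groups differ, so the spectrum has at least
`k + 3` words. -/

open Finset

lemma mem_scatFact {k : ℕ} {w u : List Bool} :
    u ∈ ScatFact k w ↔ u.Sublist w ∧ u.length = k := by
  simp [ScatFact]

theorem List.exists_sublist_count_eq_of_le {α : Type*} [DecidableEq α] (a : α) {j : ℕ}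
    {w : List α} (hj : j ≤ w.count a) :
    ∃ u : List α, u.Sublist w ∧ u.count a = j ∧ ∀ b ≠ a, u.count b = w.count b := by
  obtain ⟨n, hn⟩ := Nat.exists_eq_add_of_le hj
  induction n generalizing w with
  | zero => exact ⟨w, List.Sublist.refl w, hn, fun _ _ => rfl⟩
  | succ n ih =>
    have hcount : (w.erase a).count a = j + n := by rw [List.count_erase_self]; omega
    obtain ⟨u, huw, hua, hub⟩ := ih (by omega) hcount
    exact ⟨u, huw.trans List.erase_sublist, hua,
      fun b hb => (hub b hb).trans (List.count_erase_of_ne hb)⟩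

theorem List.exists_split_of_pair_sublist_left {α : Type*} {b c : α} {w : List α}
    (h : [b, c].Sublist w) : ∃ x z, w = x ++ c :: z ∧ b ∈ x := by
  obtain ⟨r₁, r₂, rfl, hb, hc⟩ := List.cons_sublist_iff.1 h
  obtain ⟨p, z, rfl⟩ := List.append_of_mem (List.singleton_sublist.1 hc)
  exact ⟨r₁ ++ p, z, by simp, List.mem_append_left p hb⟩

theorem List.exists_split_of_pair_sublist_right {α : Type*} {b c : α} {w : List α}
    (h : [b, c].Sublist w) : ∃ x z, w = x ++ b :: z ∧ c ∈ z := by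
  obtain ⟨r₁, r₂, rfl, hb, hc⟩ := List.cons_sublist_iff.1 h
  obtain ⟨x, y, rfl⟩ := List.append_of_mem hb
  exact ⟨x, y ++ r₂, by simp, List.mem_append_right y (List.singleton_sublist.1 hc)⟩

theorem Finset.card_add_card_le_sum {ι : Type*} [DecidableEq ι] {s t : Finset ι} {f : ι → ℕ}
    (hts : t ⊆ s) (hs : ∀ i ∈ s, 1 ≤ f i) (ht : ∀ i ∈ t, 2 ≤ f i) :
    #s + #t ≤ ∑ i ∈ s, f i := by
  have h₁ : #(s \ t) ≤ ∑ i ∈ s \ t, f i := by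
    simpa using card_nsmul_le_sum (s \ t) f 1 fun i hi => hs i (mem_sdiff.1 hi).1
  have h₂ : #t * 2 ≤ ∑ i ∈ t, f i := by simpa using card_nsmul_le_sum t f 2 ht
  rw [← sum_sdiff hts, ← card_sdiff_add_card_eq_card hts]
  omega

lemma exists_sublist_count_eq (a : Bool) {w : List Bool} {i j : ℕ} (hi : i ≤ w.count a)
    (hj : j ≤ w.count (!a)) :
    ∃ u : List Bool, u.Sublist w ∧ u.count a = i ∧ u.count (!a) = j := by
  obtain ⟨v, hvw, hva, hvb⟩ := List.exists_sublist_count_eq_of_le a hi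
  obtain ⟨u, huv, hub, hua⟩ :=
    List.exists_sublist_count_eq_of_le (!a) (j := j) (w := v) (by rwa [hvb (!a) (by simp)])
  exact ⟨u, huv.trans hvw, by rw [hua a (by simp), hva], hub⟩

lemma pairwise_of_not_sublist {a : Bool} {u : List Bool} (h : ¬ [!a, a].Sublist u) :
    u.Pairwise fun x y => x = a ∨ y = !a :=
  List.pairwise_iff_forall_sublist.2 fun {x y} hxy => by
    cases a <;> cases x <;> cases y <;> simp_all

section Fibers

variable {k : ℕ} {w : List Bool} (a : Bool)

lemma card_scatFact_eq_sum :
    #(ScatFact k w) = ∑ j ∈ range (k + 1), #{u ∈ ScatFact k w | u.count a = j} :=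
  card_eq_sum_card_fiberwise fun u hu => by
    have := (mem_scatFact.1 hu).2
    have := u.count_le_length (a := a)
    simp only [coe_range, Set.mem_Iio]
    omega

lemma filter_count_not_scatFact {j : ℕ} (hj : j ≤ k) :
    {u ∈ ScatFact k w | u.count (!a) = k - j} = {u ∈ ScatFact k w | u.count a = j} :=
  filter_congr fun u hu => by
    have := (mem_scatFact.1 hu).2
    have := u.count_not_add_count a
    omega

lemma filter_count_scatFact_nonempty {j : ℕ} (hj : j ≤ k) (ha : j ≤ w.count a)
    (hb : k - j ≤ w.count (!a)) : {u ∈ ScatFact k w | u.count a = j}.Nonempty := by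
  obtain ⟨u, huw, hua, hub⟩ := exists_sublist_count_eq a ha hb
  refine ⟨u, mem_filter.2 ⟨mem_scatFact.2 ⟨huw, ?_⟩, hua⟩⟩
  rw [← u.count_add_count_not a]
  omega

/-- If `ba` is not a subsequence, the letters `a` of `w` all come first; so do those of each
subsequence, which is therefore determined by its letter counts. -/
lemma card_filter_count_scatFact_le_one (h : ¬ [!a, a].Sublist w) (j : ℕ) :
    #{u ∈ ScatFact k w | u.count a = j} ≤ 1 := by
  refine card_le_one.2 fun u hu v hv => ?_
  simp only [mem_filter, mem_scatFact] at hu hv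
  have hsorted {x : List Bool} (hx : x.Sublist w) : x.Pairwise fun x y => x = a ∨ y = !a :=
    pairwise_of_not_sublist fun hs => h (hs.trans hx)
  have hperm : u.Perm v := List.perm_iff_count.2 fun c => by
    have hu' := u.count_not_add_count a
    have hv' := v.count_not_add_count a
    obtain rfl | rfl : c = a ∨ c = !a := by cases a <;> cases c <;> simp
    all_goals omega
  exact hperm.eq_of_pairwise (fun x y _ _ => by cases a <;> cases x <;> cases y <;> simp)
    (hsorted hu.1.1) (hsorted hv.1.1)

lemma card_scatFact_le_of_not_sublist (h : ¬ [!a, a].Sublist w) : #(ScatFact k w) ≤ k + 1 := by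
  rw [card_scatFact_eq_sum a]
  simpa using sum_le_card_nsmul (range (k + 1)) _ 1 fun j _ =>
    card_filter_count_scatFact_le_one a h j

lemma replicate_append_cons_mem_filter_count {x z : List Bool} (hw : w = x ++ a :: z) {s : ℕ}
    (hs : s < k) (hx : s ≤ x.count (!a)) (hz : k - 1 - s ≤ z.count (!a)) :
    List.replicate s (!a) ++ a :: List.replicate (k - 1 - s) (!a) ∈
      {u ∈ ScatFact k w | u.count a = 1} := by
  subst hw
  have hsub := (List.replicate_sublist_iff.2 hx).append
    ((List.replicate_sublist_iff.2 hz).cons_cons a)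
  exact mem_filter.2 ⟨mem_scatFact.2 ⟨hsub, by simp; omega⟩, by simp [List.count_replicate]⟩

lemma one_lt_card_filter_count_eq_one (hk : 2 ≤ k) (hw : w.count (!a) = k)
    (hab : [a, !a].Sublist w) (hba : [!a, a].Sublist w) :
    1 < #{u ∈ ScatFact k w | u.count a = 1} := by
  set F := {u ∈ ScatFact k w | u.count a = 1}
  let oneA (s : ℕ) := List.replicate s (!a) ++ a :: List.replicate (k - 1 - s) (!a)
  suffices ∃ s t, s ≠ t ∧ oneA s ∈ F ∧ oneA t ∈ F by
    obtain ⟨s, t, hst, hs, ht⟩ := this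
    refine one_lt_card_iff.2 ⟨_, _, hs, ht, fun h => hst ?_⟩
    simpa [oneA, List.idxOf_append, List.mem_replicate] using congrArg (List.idxOf a) h
  have hsplit {x z : List Bool} (hxz : w = x ++ a :: z) : x.count (!a) + z.count (!a) = k := by
    simp only [hxz, List.count_append, ne_eq, Bool.eq_not_self, not_false_eq_true,
      List.count_cons_of_ne] at hw
    omega
  have interior {x z : List Bool} (hxz : w = x ++ a :: z) (hx : 1 ≤ x.count (!a))
      (hz : 1 ≤ z.count (!a)) : ∃ s t, s ≠ t ∧ oneA s ∈ F ∧ oneA t ∈ F := by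
    have := hsplit hxz
    exact ⟨x.count (!a) - 1, x.count (!a), by omega,
      replicate_append_cons_mem_filter_count a hxz (by omega) (by omega) (by omega),
      replicate_append_cons_mem_filter_count a hxz (by omega) le_rfl (by omega)⟩
  obtain ⟨x₁, z₁, hw₁, hx₁⟩ := List.exists_split_of_pair_sublist_left hba
  obtain ⟨x₂, z₂, hw₂, hz₂⟩ := List.exists_split_of_pair_sublist_right hab
  rw [← List.count_pos_iff] at hx₁ hz₂
  by_cases hz₁ : 1 ≤ z₁.count (!a)
  · exact interior hw₁ hx₁ hz₁
  by_cases hx₂ : 1 ≤ x₂.count (!a)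
  · exact interior hw₂ hx₂ hz₂
  have := hsplit hw₁
  have := hsplit hw₂
  exact ⟨k - 1, 0, by omega,
    replicate_append_cons_mem_filter_count a hw₁ (by omega) (by omega) (by omega),
    replicate_append_cons_mem_filter_count a hw₂ (by omega) (by omega) (by omega)⟩

lemma add_three_le_card_scatFact (hk : 3 ≤ k) (hfalse : w.count false = k)
    (htrue : w.count true = k) (hft : [false, true].Sublist w) (htf : [true, false].Sublist w) :
    k + 3 ≤ #(ScatFact k w) := by
  have hfalse₁ := one_lt_card_filter_count_eq_one false (by omega) htrue hft htf
  have htrue₁ := one_lt_card_filter_count_eq_one true (by omega) hfalse htf hft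
  rw [← filter_count_not_scatFact true (by omega : 1 ≤ k), Bool.not_true] at htrue₁
  have hfibers : ∀ j ∈ range (k + 1), 1 ≤ #{u ∈ ScatFact k w | u.count false = j} := by
    intro j hj
    rw [mem_range] at hj
    exact card_pos.2 <| filter_count_scatFact_nonempty false (by omega) (by omega)
      (by simp [htrue])
  have := card_add_card_le_sum (t := {1, k - 1}) (by intro j; simp; omega) hfibers
    (by simpa using ⟨hfalse₁, htrue₁⟩)
  rw [card_range, card_pair (by omega), ← card_scatFact_eq_sum false] at this
  exact this

end Fibers

theorem no_scatfact_card_k_add_two (k : ℕ) (hk : 3 ≤ k) :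
    ¬ ∃ w : List Bool, w.length = 2 * k ∧ w.count wa = k ∧ w.count wb = k ∧
      (ScatFact k w).card = k + 2 := by
  rintro ⟨w, -, hfalse, htrue, hcard⟩
  by_cases hsorted : ∃ a, ¬ [!a, a].Sublist w
  · obtain ⟨a, ha⟩ := hsorted
    have := card_scatFact_le_of_not_sublist a ha (k := k)
    omega
  push Not at hsorted
  have := add_three_le_card_scatFact hk hfalse htrue (hsorted true) (hsorted false)
  omega
end

section
/- For k ≥ 4 and 1 ≤ i ≤ ⌊k/2⌋, the k-spectrum of the word a^{k-i} b^k a^i has exactly (i+1)(k-i+1) = k(i+1) − i² + 1 elements; explicitly it consists of all words a^r b^s a^t with r+s+t = k, 0 ≤ t ≤ i, 0 ≤ r ≤ k-i. -/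
open List

section ThreeBlocks

variable {α : Type*}

theorem sublist_replicate_append_replicate_append_replicate_iff {a b c : α} {m n p : ℕ}
    {u : List α} :
    u <+ replicate m a ++ replicate n b ++ replicate p c ↔
      ∃ r s t, r ≤ m ∧ s ≤ n ∧ t ≤ p ∧ u = replicate r a ++ replicate s b ++ replicate t c := by
  constructor
  · intro h
    obtain ⟨xy, z, rfl, hxy, hz⟩ := sublist_append_iff.1 h
    obtain ⟨x, y, rfl, hx, hy⟩ := sublist_append_iff.1 hxy
    obtain ⟨r, hr, rfl⟩ := sublist_replicate_iff.1 hx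
    obtain ⟨s, hs, rfl⟩ := sublist_replicate_iff.1 hy
    obtain ⟨t, ht, rfl⟩ := sublist_replicate_iff.1 hz
    exact ⟨r, s, t, hr, hs, ht, rfl⟩
  · rintro ⟨r, s, t, hr, hs, ht, rfl⟩
    exact (((replicate_sublist_replicate a).2 hr).append ((replicate_sublist_replicate b).2 hs)).append
      ((replicate_sublist_replicate c).2 ht)

variable [DecidableEq α] {a b : α}

theorem idxOf_replicate_append_cons (hab : a ≠ b) (r : ℕ) (l : List α) :
    idxOf b (replicate r a ++ b :: l) = r := by
  rw [idxOf_append_of_notMem (fun h => hab (eq_of_mem_replicate h).symm), idxOf_cons_self,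
    length_replicate, Nat.add_zero]

theorem count_replicate_append_replicate_append_replicate (hab : a ≠ b) (r s t : ℕ) :
    count b (replicate r a ++ replicate s b ++ replicate t a) = s := by
  simp [count_replicate, hab]

theorem replicate_append_replicate_append_replicate_inj (hab : a ≠ b) {r s t r' s' t' : ℕ}
    (hs : 0 < s)
    (h : replicate r a ++ replicate s b ++ replicate t a =
      replicate r' a ++ replicate s' b ++ replicate t' a) :
    r = r' ∧ s = s' ∧ t = t' := by
  have hss' : s = s' := by
    simpa only [count_replicate_append_replicate_append_replicate hab] using
      congrArg (count b) h
  subst hss'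
  obtain ⟨s, rfl⟩ := Nat.exists_eq_add_of_lt hs
  have hrr' : r = r' := by
    simpa only [Nat.add_comm r, replicate_succ, append_assoc, cons_append,
      idxOf_replicate_append_cons hab] using congrArg (idxOf b) h
  subst hrr'
  have hlen := congrArg length h
  simp only [length_append, length_replicate] at hlen
  exact ⟨rfl, rfl, by omega⟩

end ThreeBlocks

theorem mem_scatFact_iff {k : ℕ} {w u : List Bool} : u ∈ ScatFact k w ↔ u <+ w ∧ u.length = k := by
  simp [ScatFact]

theorem mem_scatFact_replicate_iff {k m n p : ℕ} (hkn : k ≤ n) {u : List Bool} :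
    u ∈ ScatFact k (replicate m wa ++ replicate n wb ++ replicate p wa) ↔
      ∃ r s t, r + s + t = k ∧ t ≤ p ∧ r ≤ m ∧
        u = replicate r wa ++ replicate s wb ++ replicate t wa := by
  rw [mem_scatFact_iff, sublist_replicate_append_replicate_append_replicate_iff]
  constructor
  · rintro ⟨⟨r, s, t, hr, -, ht, rfl⟩, hlen⟩
    simp only [length_append, length_replicate] at hlen
    exact ⟨r, s, t, hlen, ht, hr, rfl⟩
  · rintro ⟨r, s, t, hsum, ht, hr, rfl⟩
    refine ⟨⟨r, s, t, hr, by omega, ht, rfl⟩, ?_⟩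
    simp only [length_append, length_replicate, hsum]

theorem card_scatFact_replicate {k m n p : ℕ} (hmp : m + p = k) (hkn : k ≤ n) :
    (ScatFact k (replicate m wa ++ replicate n wb ++ replicate p wa)).card = (m + 1) * (p + 1) := by
  set word : ℕ × ℕ → List Bool := fun x =>
    replicate x.1 wa ++ replicate (k - x.1 - x.2) wb ++ replicate x.2 wa
  have himage : ScatFact k (replicate m wa ++ replicate n wb ++ replicate p wa) =
      (Finset.range (m + 1) ×ˢ Finset.range (p + 1)).image word := by
    ext u
    simp only [mem_scatFact_replicate_iff hkn, Finset.mem_image, Finset.mem_product,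
      Finset.mem_range, Prod.exists, word]
    constructor
    · rintro ⟨r, s, t, hsum, ht, hr, rfl⟩
      exact ⟨r, t, ⟨by omega, by omega⟩, by rw [show k - r - t = s by omega]⟩
    · rintro ⟨r, t, ⟨hr, ht⟩, rfl⟩
      exact ⟨r, k - r - t, t, by omega, by omega, by omega, rfl⟩
  rw [himage, Finset.card_image_of_injOn, Finset.card_product, Finset.card_range, Finset.card_range]
  rintro ⟨r, t⟩ hrt ⟨r', t'⟩ hrt' heq
  simp only [Finset.coe_product, Set.mem_prod, Finset.mem_coe, Finset.mem_range] at hrt hrt'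
  have hab : wa ≠ wb := Bool.false_ne_true
  rcases Nat.eq_zero_or_pos (k - r - t) with hs | hs
  · have hcount := congrArg (count wb) heq
    simp only [word, count_replicate_append_replicate_append_replicate hab] at hcount
    simp only [Prod.mk.injEq]
    omega
  · obtain ⟨hr, -, ht⟩ := replicate_append_replicate_append_replicate_inj hab hs heq
    exact Prod.ext hr ht

theorem scatfact_aki_bk_ai_general (k i : ℕ) (hi2 : i ≤ k / 2) :
    (∀ u : List Bool,
      u ∈ ScatFact k (List.replicate (k - i) wa ++ List.replicate k wb ++ List.replicate i wa) ↔
        (∃ r s t : ℕ, r + s + t = k ∧ t ≤ i ∧ r ≤ k - i ∧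
          u = List.replicate r wa ++ List.replicate s wb ++ List.replicate t wa)) ∧
    (ScatFact k (List.replicate (k - i) wa ++ List.replicate k wb ++ List.replicate i wa)).card
      = (i + 1) * (k - i + 1) := by
  have hik : i ≤ k := hi2.trans (Nat.div_le_self k 2)
  refine ⟨fun u => mem_scatFact_replicate_iff le_rfl, ?_⟩
  rw [card_scatFact_replicate (Nat.sub_add_cancel hik) le_rfl, Nat.mul_comm]

theorem scatfact_aki_bk_ai (k i : ℕ) (hk : 4 ≤ k) (hi1 : 1 ≤ i) (hi2 : i ≤ k / 2) :
    (∀ u : List Bool,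
      u ∈ ScatFact k (List.replicate (k - i) wa ++ List.replicate k wb ++ List.replicate i wa) ↔
        (∃ r s t : ℕ, r + s + t = k ∧ t ≤ i ∧ r ≤ k - i ∧
          u = List.replicate r wa ++ List.replicate s wb ++ List.replicate t wa)) ∧
    (ScatFact k (List.replicate (k - i) wa ++ List.replicate k wb ++ List.replicate i wa)).card
      = (i + 1) * (k - i + 1) :=
  scatfact_aki_bk_ai_general k i hi2
end
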